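/- Let ν be a compactly supported probability measure on Ω, and let V : (Fin K → ℝ) → ℝ be convex and twice continuously differentiable on all of (Fin K → ℝ). Define Ȳ₀(x) := ∫ ∂_0 V (u(x, β)) dν(β), where ∂_0 V is the partial derivative of V in its first coordinate. Then the diagonal second partial derivative ∂²V/∂w₀² at the origin is nonnegative; consequently, the partial derivative of Ȳ₀ at x = 0 with respect to the covariate coordinate (good 0, characteristic 0) equals (∂²V/∂w₀²)(0) · ∫ β 0 0 dν(β), and if (∂²V/∂w₀²)(0) ≠ 0 then this derivative of Ȳ₀ is positive, zero, or negative exactly when ∫ β 0 0 dν(β) is positive, zero, or negative respectively. (Sign-identification step in the proof of the independence proposition: convexity of V makes the sign of the mean first coefficient observable.) -/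

import Mathlib

set_option maxHeartbeats 1000000

open MeasureTheory

/-- The space of coefficient / covariate vectors: one vector of characteristics per good. -/
abbrev Coeff (K : ℕ) (d : Fin K → ℕ) := ∀ k : Fin K, Fin (d k) → ℝ

/-- The utility index map `u(x, β) k = ∑ ℓ, β k ℓ * x k ℓ`. -/
def idx {K : ℕ} {d : Fin K → ℕ} (x β : Coeff K d) : Fin K → ℝ :=
  fun k => ∑ ℓ : Fin (d k), β k ℓ * x k ℓ

section AuxLemmas
open Metric Set

section Aux

variable {K : ℕ} {d : Fin K → ℕ}

lemma idx_zero_left (β : Coeff K d) : idx 0 β = 0 := by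
  funext k; simp [idx]

/-- `idx · β` as a continuous linear map. -/
noncomputable def idxCLM (β : Coeff K d) : Coeff K d →L[ℝ] (Fin K → ℝ) :=
  LinearMap.toContinuousLinearMap
    { toFun := fun x => idx x β
      map_add' := by
        intro x y; funext k
        simp [idx, mul_add, Finset.sum_add_distrib]
      map_smul' := by
        intro c x; funext k
        simp [idx, Finset.mul_sum, mul_left_comm] }

@[simp] lemma idxCLM_apply (β x : Coeff K d) : idxCLM β x = idx x β := rfl

lemma continuous_idxCLM : Continuous (fun β : Coeff K d => idxCLM β) := by
  have : IsLinearMap ℝ (fun β : Coeff K d => idxCLM β) := by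
    constructor
    · intro a b; ext x k; simp [idx, add_mul, Finset.sum_add_distrib]
    · intro c a; ext x k; simp [idx, Finset.mul_sum, mul_assoc]
  exact (this.mk' _).continuous_of_finiteDimensional

lemma norm_idx_le (x β : Coeff K d) :
    ‖idx x β‖ ≤ (∑ k : Fin K, (d k : ℝ)) * ‖β‖ * ‖x‖ := by
  have hnn : 0 ≤ (∑ k : Fin K, (d k : ℝ)) * ‖β‖ * ‖x‖ := by positivity
  rw [pi_norm_le_iff_of_nonneg hnn]
  intro k
  calc ‖idx x β k‖ ≤ ∑ ℓ : Fin (d k), ‖β k ℓ * x k ℓ‖ := norm_sum_le _ _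
    _ ≤ ∑ ℓ : Fin (d k), ‖β‖ * ‖x‖ := by
        refine Finset.sum_le_sum fun ℓ _ => ?_
        rw [norm_mul]
        gcongr
        · exact (norm_le_pi_norm (β k) ℓ).trans (norm_le_pi_norm β k)
        · exact (norm_le_pi_norm (x k) ℓ).trans (norm_le_pi_norm x k)
    _ = (d k : ℝ) * (‖β‖ * ‖x‖) := by simp [mul_comm]
    _ ≤ (∑ k : Fin K, (d k : ℝ)) * (‖β‖ * ‖x‖) := by
        gcongr
        exact Finset.single_le_sum (f := fun k : Fin K => (d k : ℝ))
          (fun i _ => by positivity) (Finset.mem_univ k)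
    _ = (∑ k : Fin K, (d k : ℝ)) * ‖β‖ * ‖x‖ := by ring

lemma norm_idxCLM_le (β : Coeff K d) :
    ‖idxCLM β‖ ≤ (∑ k : Fin K, (d k : ℝ)) * ‖β‖ :=
  ContinuousLinearMap.opNorm_le_bound _ (by positivity) fun x => norm_idx_le x β

lemma continuous_idx_right (x : Coeff K d) : Continuous (fun β : Coeff K d => idx x β) := by
  refine continuous_pi fun k => ?_
  exact continuous_finset_sum _ fun ℓ _ =>
    (((continuous_apply ℓ).comp (continuous_apply k) : Continuous fun a : Coeff K d => a k ℓ)).mul continuous_const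

lemma deriv_nonneg_of_monotone {h : ℝ → ℝ} (hm : Monotone h) {c : ℝ}
    (hd : HasDerivAt h c 0) : 0 ≤ c := by
  have ht : Filter.Tendsto (slope h 0) (nhdsWithin 0 (Set.Ioi 0)) (nhds c) :=
    (hasDerivAt_iff_tendsto_slope.mp hd).mono_left
      (nhdsWithin_mono 0 (fun t ht => ne_of_gt ht))
  refine ge_of_tendsto ht ?_
  filter_upwards [self_mem_nhdsWithin] with t ht
  have : h 0 ≤ h t := hm (le_of_lt ht)
  simp only [slope_def_field, div_eq_mul_inv]
  rw [sub_zero]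
  exact mul_nonneg (sub_nonneg.2 this) (inv_nonneg.2 (le_of_lt (Set.mem_Ioi.mp ht)))

end Aux

lemma idx_single {K : ℕ} (hK : 0 < K) {d : Fin K → ℕ} (hd : ∀ k, 0 < d k) (β : Coeff K d) :
    idx (Pi.single (⟨0, hK⟩ : Fin K) (Pi.single (⟨0, hd ⟨0, hK⟩⟩ : Fin (d ⟨0, hK⟩)) 1)) β
      = β ⟨0, hK⟩ ⟨0, hd ⟨0, hK⟩⟩ • (Pi.single (⟨0, hK⟩ : Fin K) 1 : Fin K → ℝ) := by
  funext k
  by_cases h : k = (⟨0, hK⟩ : Fin K)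
  · subst h
    simp [idx, Pi.single_apply, mul_ite]
  · simp [idx, Pi.single_eq_of_ne h]


end AuxLemmas

section Main
open Metric Set

/-- Sign-identification step: convexity of `V` makes the sign of the mean first coefficient
observable from the derivative of the average structural function. -/
theorem stmt14 {K : ℕ} (hK : 0 < K) {d : Fin K → ℕ} (hd : ∀ k, 0 < d k)
    (ν : Measure (Coeff K d)) [IsProbabilityMeasure ν]
    (hνc : ∃ C : Set (Coeff K d), IsCompact C ∧ ν Cᶜ = 0)
    (V : (Fin K → ℝ) → ℝ) (hVconv : ConvexOn ℝ Set.univ V) (hV : ContDiff ℝ 2 V)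
    (Ybar : Coeff K d → ℝ)
    (hYbar : ∀ x, Ybar x = ∫ β, fderiv ℝ V (idx x β) (Pi.single (⟨0, hK⟩ : Fin K) 1) ∂ν) :
    0 ≤ iteratedFDeriv ℝ 2 V 0
        ![Pi.single (⟨0, hK⟩ : Fin K) 1, Pi.single (⟨0, hK⟩ : Fin K) 1] ∧
    fderiv ℝ Ybar 0 (Pi.single (⟨0, hK⟩ : Fin K)
        (Pi.single (⟨0, hd ⟨0, hK⟩⟩ : Fin (d ⟨0, hK⟩)) 1))
      = iteratedFDeriv ℝ 2 V 0
          ![Pi.single (⟨0, hK⟩ : Fin K) 1, Pi.single (⟨0, hK⟩ : Fin K) 1]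
        * ∫ β, β ⟨0, hK⟩ ⟨0, hd ⟨0, hK⟩⟩ ∂ν ∧
    (iteratedFDeriv ℝ 2 V 0
        ![Pi.single (⟨0, hK⟩ : Fin K) 1, Pi.single (⟨0, hK⟩ : Fin K) 1] ≠ 0 →
      ((0 < fderiv ℝ Ybar 0 (Pi.single (⟨0, hK⟩ : Fin K)
          (Pi.single (⟨0, hd ⟨0, hK⟩⟩ : Fin (d ⟨0, hK⟩)) 1))
        ↔ 0 < ∫ β, β ⟨0, hK⟩ ⟨0, hd ⟨0, hK⟩⟩ ∂ν) ∧
      (fderiv ℝ Ybar 0 (Pi.single (⟨0, hK⟩ : Fin K)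
          (Pi.single (⟨0, hd ⟨0, hK⟩⟩ : Fin (d ⟨0, hK⟩)) 1)) = 0
        ↔ (∫ β, β ⟨0, hK⟩ ⟨0, hd ⟨0, hK⟩⟩ ∂ν) = 0) ∧
      (fderiv ℝ Ybar 0 (Pi.single (⟨0, hK⟩ : Fin K)
          (Pi.single (⟨0, hd ⟨0, hK⟩⟩ : Fin (d ⟨0, hK⟩)) 1)) < 0
        ↔ (∫ β, β ⟨0, hK⟩ ⟨0, hd ⟨0, hK⟩⟩ ∂ν) < 0))) := by
  obtain ⟨C, hCcomp, hC0⟩ := hνc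
  set k0 : Fin K := ⟨0, hK⟩
  set ℓ0 : Fin (d k0) := ⟨0, hd k0⟩
  set e : Fin K → ℝ := Pi.single k0 1 with he
  set v : Coeff K d := Pi.single k0 (Pi.single ℓ0 1) with hv
  -- G is the directional derivative of V in direction e
  set G : (Fin K → ℝ) → ℝ := fun y => fderiv ℝ V y e with hGdef
  have hVd : Differentiable ℝ V := hV.differentiable two_ne_zero
  have hfV : ContDiff ℝ 1 (fderiv ℝ V) := hV.fderiv_right (by norm_num)
  have hG : ContDiff ℝ 1 G := hfV.clm_apply contDiff_const
  have hGd : Differentiable ℝ G := hG.differentiable one_ne_zero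
  -- identify the second derivative
  set A : ℝ := fderiv ℝ G 0 e with hA
  have hAeq : iteratedFDeriv ℝ 2 V 0 ![e, e] = A := by
    rw [iteratedFDeriv_two_apply]
    have h2 : HasFDerivAt G
        ((ContinuousLinearMap.apply ℝ ℝ e).comp (fderiv ℝ (fderiv ℝ V) 0)) 0 :=
      (ContinuousLinearMap.apply ℝ ℝ e).hasFDerivAt.comp 0
        (hfV.differentiable one_ne_zero 0).hasFDerivAt
    rw [hA, h2.fderiv]
    simp
  -- Part 1: nonnegativity from convexity
  have hA0 : 0 ≤ A := by
    set g : ℝ → ℝ := fun t => V (t • e) with hg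
    have hgconv : ConvexOn ℝ Set.univ g := by
      have h0 := hVconv.comp_affineMap (AffineMap.lineMap (0 : Fin K → ℝ) e)
      have h1 : (V ∘ (AffineMap.lineMap (0 : Fin K → ℝ) e)) = g :=
        funext fun t => by simp [hg, AffineMap.lineMap_apply]
      rwa [h1, Set.preimage_univ] at h0
    have hgd : ∀ t : ℝ, HasDerivAt g (G (t • e)) t := by
      intro t
      have h1 : HasDerivAt (fun s : ℝ => s • e) e t := by
        simpa using (hasDerivAt_id t).smul_const e
      exact (hVd (t • e)).hasFDerivAt.comp_hasDerivAt t h1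
    have hderiv : deriv g = fun t => G (t • e) := funext fun t => (hgd t).deriv
    have hmono : Monotone (deriv g) := by
      have := hgconv.monotoneOn_deriv (fun x _ => (hgd x).differentiableAt)
      simpa [monotoneOn_univ] using this
    have h2 : HasDerivAt (fun t : ℝ => G (t • e)) A 0 := by
      have h1 : HasDerivAt (fun s : ℝ => s • e) e (0 : ℝ) := by
        simpa using (hasDerivAt_id (0 : ℝ)).smul_const e
      have := (hGd ((0:ℝ) • e)).hasFDerivAt.comp_hasDerivAt 0 h1
      rw [zero_smul] at this
      exact this
    exact deriv_nonneg_of_monotone hmono (hderiv ▸ h2)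
  -- Part 2: differentiation under the integral sign
  set D : ℝ := ∑ k : Fin K, (d k : ℝ) with hD
  have hD0 : 0 ≤ D := by positivity
  obtain ⟨R₀, hR₀⟩ := hCcomp.isBounded.exists_norm_le
  set R : ℝ := max R₀ 0 with hR
  have hR0 : 0 ≤ R := le_max_right _ _
  have hRC : ∀ β ∈ C, ‖β‖ ≤ R := fun β hβ => (hR₀ β hβ).trans (le_max_left _ _)
  have haeC : ∀ᵐ β ∂ν, β ∈ C := by
    rw [MeasureTheory.ae_iff]
    exact hC0
  -- bound on the derivative of G on the relevant ball
  obtain ⟨M, hM⟩ := (isCompact_closedBall (0 : Fin K → ℝ) (D * R)).exists_bound_of_continuousOn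
    (hG.continuous_fderiv one_ne_zero).continuousOn
  have hM0 : 0 ≤ M :=
    le_trans (norm_nonneg _) (hM 0 (mem_closedBall_self (by positivity)))
  set F : Coeff K d → Coeff K d → ℝ := fun x β => G (idx x β) with hF
  set F' : Coeff K d → Coeff K d → Coeff K d →L[ℝ] ℝ :=
    fun x β => (fderiv ℝ G (idx x β)).comp (idxCLM β) with hF'
  have key : HasFDerivAt (fun x => ∫ β, F x β ∂ν) (∫ β, F' 0 β ∂ν) 0 := by
    apply hasFDerivAt_integral_of_dominated_of_fderiv_le
      (s := ball 0 1) (bound := fun _ => M * (D * R)) (ball_mem_nhds 0 one_pos)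
    · filter_upwards with x
      exact ((hG.continuous.comp (continuous_idx_right x))).aestronglyMeasurable
    · have : F 0 = fun _ => G 0 := funext fun β => by simp [hF, idx_zero_left]
      rw [this]
      exact integrable_const _
    · have : F' 0 = fun β => (fderiv ℝ G 0).comp (idxCLM β) :=
        funext fun β => by simp [hF', idx_zero_left]
      rw [this]
      exact (continuous_const.clm_comp continuous_idxCLM).aestronglyMeasurable
    · filter_upwards [haeC] with β hβ
      intro x hx
      have hxball : ‖x‖ ≤ 1 := le_of_lt (by simpa using mem_ball_iff_norm.mp hx)
      have hidx : ‖idx x β‖ ≤ D * R := by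
        calc ‖idx x β‖ ≤ D * ‖β‖ * ‖x‖ := norm_idx_le x β
          _ ≤ D * R * 1 := by gcongr; exact hRC β hβ
          _ = D * R := mul_one _
      calc ‖F' x β‖ ≤ ‖fderiv ℝ G (idx x β)‖ * ‖idxCLM β‖ :=
            ContinuousLinearMap.opNorm_comp_le _ _
        _ ≤ M * (D * R) := by
            refine mul_le_mul (hM _ (mem_closedBall_zero_iff.mpr hidx))
              ((norm_idxCLM_le β).trans ?_) (norm_nonneg _) hM0
            gcongr
            exact hRC β hβ
    · exact integrable_const _
    · filter_upwards with β
      intro x _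
      exact (hGd (idx x β)).hasFDerivAt.comp x (idxCLM β).hasFDerivAt
  have hYb : (fun x => ∫ β, F x β ∂ν) = Ybar := funext fun x => (hYbar x).symm
  rw [hYb] at key
  have hF'int : Integrable (fun β => F' 0 β) ν := by
    refine Integrable.mono' (integrable_const (M * (D * R))) ?_ ?_
    · have : F' 0 = fun β => (fderiv ℝ G 0).comp (idxCLM β) :=
        funext fun β => by simp [hF', idx_zero_left]
      rw [this]
      exact (continuous_const.clm_comp continuous_idxCLM).aestronglyMeasurable
    · filter_upwards [haeC] with β hβ
      calc ‖F' 0 β‖ ≤ ‖fderiv ℝ G (idx 0 β)‖ * ‖idxCLM β‖ :=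
            ContinuousLinearMap.opNorm_comp_le _ _
        _ ≤ M * (D * R) := by
            refine mul_le_mul ?_ ((norm_idxCLM_le β).trans ?_) (norm_nonneg _) hM0
            · refine hM _ (mem_closedBall_zero_iff.mpr ?_)
              rw [idx_zero_left]
              simpa using (by positivity : (0:ℝ) ≤ D * R)
            · gcongr
              exact hRC β hβ
  have heval : fderiv ℝ Ybar 0 v = A * ∫ β, β k0 ℓ0 ∂ν := by
    rw [key.fderiv]
    rw [ContinuousLinearMap.integral_apply hF'int]
    have : (fun β => F' 0 β v) = fun β => (β k0 ℓ0) * A := by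
      funext β
      simp only [hF', ContinuousLinearMap.comp_apply, idxCLM_apply, idx_zero_left]
      rw [idx_single hK hd β, (fderiv ℝ G 0).map_smul]
      simp [hA, he, smul_eq_mul]
      rfl
    rw [this, integral_mul_const]
    ring
  rw [hAeq]
  refine ⟨hA0, heval, fun hAne => ?_⟩
  have hApos : 0 < A := lt_of_le_of_ne hA0 (Ne.symm hAne)
  rw [heval]
  refine ⟨⟨fun h => ?_, fun h => mul_pos hApos h⟩,
    ⟨fun h => ?_, fun h => by rw [h, mul_zero]⟩,
    ⟨fun h => ?_, fun h => mul_neg_of_pos_of_neg hApos h⟩⟩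
  · nlinarith
  · rcases mul_eq_zero.mp h with h1 | h1
    · exact absurd h1 hAne
    · exact h1
  · nlinarith

end Main
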